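/- Let t ≠ 0 and b be complex numbers satisfying 3t b⁴ + 4b² = 16. Then for real z > |b| (with b real, t real, z² > b²), the derivative of h(z) = 2·ln((z + √(z² - b²))/b) - (z/8)(2tz² + tb² + 4)√(z² - b²) equals h'(z) = -(tz² + 1 + tb²/2)·√(z² - b²). -/

import Mathlib

/-! The logarithmic term is `2 arcosh (z / |b|)`, with derivative `2 / √(z² - b²)`; the product rule on
the second term gives a rational function of `z` and `s = √(z² - b²)`. Multiplying through by `s`
and substituting `s² = z² - b²`, the two sides differ by a multiple of `16 - 3tb⁴ - 4b²`. -/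

open Real

theorem hasDerivAt_sqrt_sq_sub {b z : ℝ} (h : b ^ 2 < z ^ 2) :
    HasDerivAt (fun x : ℝ => √(x ^ 2 - b ^ 2)) (z / √(z ^ 2 - b ^ 2)) z := by
  have hsq : HasDerivAt (fun x : ℝ => x ^ 2 - b ^ 2) (2 * z) z := by
    simpa using (hasDerivAt_pow 2 z).sub_const (b ^ 2)
  convert hsq.sqrt (sub_pos.mpr h).ne' using 1
  ring

theorem hasDerivAt_log_add_sqrt_sq_sub_div {b z : ℝ} (hb : b ≠ 0) (h : b ^ 2 < z ^ 2) :
    HasDerivAt (fun x : ℝ => log ((x + √(x ^ 2 - b ^ 2)) / b)) (√(z ^ 2 - b ^ 2))⁻¹ z := by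
  have hsqrt := hasDerivAt_sqrt_sq_sub h
  set s := √(z ^ 2 - b ^ 2)
  have hs2 : s ^ 2 = z ^ 2 - b ^ 2 := sq_sqrt (sub_pos.mpr h).le
  have hs : s ≠ 0 := (sqrt_pos.mpr (sub_pos.mpr h)).ne'
  -- `z + s = 0` would force `z² = s² = z² - b²`.
  have hzs : z + s ≠ 0 := by
    intro hzs
    have : s ^ 2 = z ^ 2 := by rw [show s = -z by linarith]; ring
    have : b ^ 2 = 0 := by linarith
    exact hb (pow_eq_zero_iff two_ne_zero |>.mp this)
  convert ((hasDerivAt_id' (x := z)).fun_add hsqrt |>.div_const b).log (div_ne_zero hzs hb) using 1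
  field_simp
  rw [add_comm]
  exact (div_self hzs).symm

/-- Derivative of the genus-zero `h`-function in the symmetric case: if
`3tb⁴ + 4b² = 16` then for real `z > |b|`,
`d/dz [2 ln((z+√(z²-b²))/b) - (z/8)(2tz²+tb²+4)√(z²-b²)]
  = -(tz² + 1 + tb²/2)√(z²-b²)`. -/
theorem h_derivative_symmetric
    (t b : ℝ) (hmod : 3 * t * b ^ 4 + 4 * b ^ 2 = 16)
    (z : ℝ) (hz : |b| < z) :
    HasDerivAt (fun z : ℝ =>
        2 * Real.log ((z + Real.sqrt (z ^ 2 - b ^ 2)) / b) -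
          (z / 8) * (2 * t * z ^ 2 + t * b ^ 2 + 4) * Real.sqrt (z ^ 2 - b ^ 2))
      (-(t * z ^ 2 + 1 + t * b ^ 2 / 2) * Real.sqrt (z ^ 2 - b ^ 2)) z := by
  have hb : b ≠ 0 := by
    rintro rfl
    norm_num at hmod
  have hbz : b ^ 2 < z ^ 2 := sq_lt_sq.mpr (hz.trans_le (le_abs_self z))
  have hpoly : HasDerivAt (fun x : ℝ => x / 8 * (2 * t * x ^ 2 + t * b ^ 2 + 4))
      ((6 * t * z ^ 2 + t * b ^ 2 + 4) / 8) z := by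
    refine ((hasDerivAt_id' (x := z)).div_const 8 |>.fun_mul
      (((hasDerivAt_pow 2 z).const_mul (2 * t)).add_const (t * b ^ 2) |>.add_const 4)).congr_deriv ?_
    push_cast
    ring
  refine (((hasDerivAt_log_add_sqrt_sq_sub_div hb hbz).const_mul 2).sub
    (hpoly.mul (hasDerivAt_sqrt_sq_sub hbz))).congr_deriv ?_
  set s := √(z ^ 2 - b ^ 2)
  have hs2 : s ^ 2 = z ^ 2 - b ^ 2 := sq_sqrt (sub_pos.mpr hbz).le
  have hs : s ≠ 0 := (sqrt_pos.mpr (sub_pos.mpr hbz)).ne'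
  field_simp
  linear_combination (4 * t * z ^ 2 + 6 * t * b ^ 2 + 8) * hs2 - 2 * hmod
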